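/- For every $T > 0$, every $c \in (0, 1/2)$ and every $K \ge 0$, there exists a positive integer $m$ such that, with $\gamma = m^2 + K$, $u_m(x,t) = m\sin(mx)\,e^{-\gamma t}\,\frac{e^{2\gamma t}-1}{2\gamma}$ and $F_m(x,t) = -\cos(mx)e^{\gamma t}$, one has $\int_{-\pi}^{\pi} u_m(x,T)^2\,dx \;\ge\; \left(\frac{1}{2} - c\right) \int_0^T \int_{-\pi}^{\pi} F_m(x,t)^2\,dx\,dt$. -/

import Mathlib

/-!
Both integrals are explicit: with `S = (e^{2γT} - 1)/(2γ)` the right-hand side is `(1/2 - c) π S`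
and the left-hand side is `π S · (m²/γ)(1 - e^{-2γT}) / 2`. The factor `(m²/γ)(1 - e^{-2γT})`
tends to `1` as `m → ∞` (with `γ = m² + K`, `T > 0`), so it eventually exceeds `1 - 2c`.
-/

open Real Filter Topology intervalIntegral

lemma integral_sin_natCast_mul_sq {m : ℕ} (hm : m ≠ 0) :
    ∫ x in (-π)..π, sin (m * x) ^ 2 = π := by
  rw [integral_comp_mul_left (fun y => sin y ^ 2) (Nat.cast_ne_zero.mpr hm), integral_sin_sq]
  simp only [mul_neg, sin_neg, sin_nat_mul_pi, cos_neg, smul_eq_mul]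
  field_simp
  ring

lemma integral_cos_natCast_mul_sq {m : ℕ} (hm : m ≠ 0) :
    ∫ x in (-π)..π, cos (m * x) ^ 2 = π := by
  rw [integral_comp_mul_left (fun y => cos y ^ 2) (Nat.cast_ne_zero.mpr hm), integral_cos_sq]
  simp only [mul_neg, sin_neg, sin_nat_mul_pi, cos_neg, smul_eq_mul]
  field_simp
  ring

lemma integral_exp_mul {a : ℝ} (ha : a ≠ 0) (T : ℝ) :
    ∫ t in (0:ℝ)..T, exp (a * t) = (exp (a * T) - 1) / a := by
  rw [integral_comp_mul_left exp ha, integral_exp, mul_zero, exp_zero, smul_eq_mul]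
  field_simp

lemma tendsto_natCast_sq_add_atTop (K : ℝ) :
    Tendsto (fun m : ℕ => (m : ℝ) ^ 2 + K) atTop atTop :=
  tendsto_atTop_add_const_right _ K
    ((tendsto_pow_atTop two_ne_zero).comp tendsto_natCast_atTop_atTop)

lemma tendsto_sq_div_mul_one_sub_exp (K : ℝ) {T : ℝ} (hT : 0 < T) :
    Tendsto (fun m : ℕ =>
        (m : ℝ) ^ 2 / ((m : ℝ) ^ 2 + K) * (1 - exp (-(2 * ((m : ℝ) ^ 2 + K) * T)))) atTop (𝓝 1) := by
  have hratio : Tendsto (fun m : ℕ => (m : ℝ) ^ 2 / ((m : ℝ) ^ 2 + K)) atTop (𝓝 1) := by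
    simpa [Function.comp_def] using
      (tendsto_natCast_div_add_atTop K).comp (tendsto_pow_atTop (α := ℕ) two_ne_zero)
  have hγ : Tendsto (fun m : ℕ => 2 * ((m : ℝ) ^ 2 + K) * T) atTop atTop :=
    ((tendsto_natCast_sq_add_atTop K).const_mul_atTop two_pos).atTop_mul_const hT
  simpa using hratio.mul ((tendsto_exp_neg_atTop_nhds_zero.comp hγ).const_sub 1)

lemma sq_mul_exp_neg_mul_sub_one_div {m γ T : ℝ} (hγ : γ ≠ 0) :
    (m * exp (-γ * T) * ((exp (2 * γ * T) - 1) / (2 * γ))) ^ 2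
      = (exp (2 * γ * T) - 1) / (2 * γ) * (m ^ 2 / γ * (1 - exp (-(2 * γ * T)))) / 2 := by
  have hsq : exp (2 * γ * T) = exp (γ * T) ^ 2 := by rw [← exp_nat_mul]; ring_nf
  rw [neg_mul, exp_neg, exp_neg, hsq]
  field_simp

lemma half_sub_mul_le_mul_sq_of_le {m γ T c p : ℝ} (hγ : 0 < γ) (hT : 0 ≤ T) (hp : 0 ≤ p)
    (h : 1 - 2 * c ≤ m ^ 2 / γ * (1 - exp (-(2 * γ * T)))) :
    (1 / 2 - c) * (p * ((exp (2 * γ * T) - 1) / (2 * γ)))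
      ≤ p * (m * exp (-γ * T) * ((exp (2 * γ * T) - 1) / (2 * γ))) ^ 2 := by
  have hS : 0 ≤ (exp (2 * γ * T) - 1) / (2 * γ) :=
    div_nonneg (sub_nonneg.mpr (one_le_exp (by positivity))) (by positivity)
  rw [sq_mul_exp_neg_mul_sub_one_div hγ.ne']
  nlinarith [mul_nonneg hp hS]

theorem stmt_6_general (T : ℝ) (hT : 0 < T) (c : ℝ) (hc : c ∈ Set.Ioo (0:ℝ) (1/2))
    (K : ℝ) :
    ∃ m : ℕ, 0 < m ∧
      ∀ (γ : ℝ), γ = (m : ℝ) ^ 2 + K →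
      ∀ (u F : ℝ → ℝ → ℝ),
        (∀ x t, u x t = (m : ℝ) * Real.sin ((m : ℝ) * x) * Real.exp (-γ * t) *
            ((Real.exp (2 * γ * t) - 1) / (2 * γ))) →
        (∀ x t, F x t = -Real.cos ((m : ℝ) * x) * Real.exp (γ * t)) →
        (∫ x in (-Real.pi)..Real.pi, (u x T) ^ 2)
          ≥ (1 / 2 - c) * ∫ t in (0:ℝ)..T, ∫ x in (-Real.pi)..Real.pi, (F x t) ^ 2 := by
  have hc' : 1 - 2 * c < 1 := by linarith [hc.1]
  obtain ⟨m, ⟨hratio, hγ_pos⟩, hm⟩ :=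
    (((tendsto_sq_div_mul_one_sub_exp K hT).eventually (lt_mem_nhds hc')).and
      ((tendsto_natCast_sq_add_atTop K).eventually_gt_atTop 0) |>.and
        (eventually_ne_atTop 0)).exists
  refine ⟨m, Nat.pos_of_ne_zero hm, fun γ hγ u F hu hF => ?_⟩
  rw [← hγ] at hratio hγ_pos
  have hu_sq : ∀ x, u x T ^ 2
      = (m * exp (-γ * T) * ((exp (2 * γ * T) - 1) / (2 * γ))) ^ 2 * sin (m * x) ^ 2 :=
    fun x => by rw [hu]; ring
  have hF_sq : ∀ x t, F x t ^ 2 = exp (2 * γ * t) * cos (m * x) ^ 2 :=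
    fun x t => by rw [hF, show 2 * γ * t = γ * t + γ * t by ring, exp_add]; ring
  simp_rw [hu_sq, hF_sq, integral_const_mul, integral_sin_natCast_mul_sq hm,
    integral_cos_natCast_mul_sq hm, mul_comm _ π, integral_const_mul,
    integral_exp_mul (by positivity : 2 * γ ≠ 0)]
  exact half_sub_mul_le_mul_sq_of_le hγ_pos hT.le pi_pos.le hratio.le

/-- for every `T > 0`, `c ∈ (0,1/2)` and `K ≥ 0` there is a positive integer `m`
such that, with `γ = m² + K`, the explicit solution `u_m` and potential `F_m` satisfy
`∫_{-π}^{π} u_m(x,T)² dx ≥ (1/2 - c) ∫_0^T ∫_{-π}^{π} F_m(x,t)² dx dt`. -/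
theorem stmt_6 (T : ℝ) (hT : 0 < T) (c : ℝ) (hc : c ∈ Set.Ioo (0:ℝ) (1/2))
    (K : ℝ) (hK : 0 ≤ K) :
    ∃ m : ℕ, 0 < m ∧
      ∀ (γ : ℝ), γ = (m : ℝ) ^ 2 + K →
      ∀ (u F : ℝ → ℝ → ℝ),
        (∀ x t, u x t = (m : ℝ) * Real.sin ((m : ℝ) * x) * Real.exp (-γ * t) *
            ((Real.exp (2 * γ * t) - 1) / (2 * γ))) →
        (∀ x t, F x t = -Real.cos ((m : ℝ) * x) * Real.exp (γ * t)) →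
        (∫ x in (-Real.pi)..Real.pi, (u x T) ^ 2)
          ≥ (1 / 2 - c) * ∫ t in (0:ℝ)..T, ∫ x in (-Real.pi)..Real.pi, (F x t) ^ 2 :=
  stmt_6_general T hT c hc K
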